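/- arXiv:1810.01759 — 3 statements merged into one kernel-verified Lean document; each statement's English description precedes it below -/
import Mathlib

section
/- Let n ≥ 1 be an integer. For each 0 ≤ i ≤ n let Q_i be a nonzero formal Laurent series in ℚ((q)), and set P_i := (∏_{k=n−i+1}^{n}(1 − q^k)) · Q_i, i.e. P_i = ((q;q)_n/(q;q)_{n−i}) · Q_i. Assume that ord(P_i) + i < ord(P_{i+1}) for all 0 ≤ i < n. Then Σ_{i=0}^{n} P_i and Σ_{i=0}^{n} Q_i are nonzero and Σ_{i=0}^{n} P_i ≐_n Σ_{i=0}^{n} Q_i. -/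
open Finset

/-- Two nonzero formal Laurent series over `ℚ` are `n`-equivalent if their first `n`
coefficients (counted from their respective orders) agree up to a common sign. -/
def NEquiv (n : ℕ) (P₁ P₂ : LaurentSeries ℚ) : Prop :=
  ∃ ε : ℚ, (ε = 1 ∨ ε = -1) ∧
    ∀ k : ℕ, k < n → P₁.coeff (P₁.order + k) = ε * P₂.coeff (P₂.order + k)

/-- The variable `q` of the Laurent series field `ℚ((q))`. -/
noncomputable def qv : LaurentSeries ℚ := HahnSeries.single 1 1

lemma qv_pow (k : ℕ) : qv ^ k = HahnSeries.single (k : ℤ) 1 := by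
  simp [qv, HahnSeries.single_pow]

/-- coefficients below `c` of `∏ (1 - q^k) - 1` vanish when all `k ≥ c ≥ 0`. -/
lemma prod_sub_one_coeff (s : Finset ℕ) (c : ℤ) (hc : 0 ≤ c)
    (hs : ∀ k ∈ s, c ≤ (k : ℤ)) :
    ∀ j : ℤ, j < c → ((∏ k ∈ s, (1 - qv ^ k)) - 1).coeff j = 0 := by
  classical
  induction s using Finset.induction with
  | empty => simp
  | @insert a s ha ih =>
    intro j hj
    have hsa : ∀ k ∈ s, c ≤ (k : ℤ) := fun k hk => hs k (Finset.mem_insert_of_mem hk)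
    have hac : c ≤ (a : ℤ) := hs a (Finset.mem_insert_self a s)
    have ihj := ih hsa
    set E : LaurentSeries ℚ := (∏ k ∈ s, (1 - qv ^ k)) - 1 with hE
    have hprod : (∏ k ∈ s, (1 - qv ^ k)) = 1 + E := by rw [hE]; ring
    rw [Finset.prod_insert ha, hprod]
    have expand : (1 - qv ^ a) * (1 + E) - 1
        = E - HahnSeries.single (a : ℤ) 1 - HahnSeries.single (a : ℤ) 1 * E := by
      rw [qv_pow]; ring
    rw [expand]
    have h1 : E.coeff j = 0 := ihj j hj
    have h2 : (HahnSeries.single (a : ℤ) (1 : ℚ)).coeff j = 0 :=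
      HahnSeries.coeff_single_of_ne (by omega)
    have h3 : (HahnSeries.single (a : ℤ) (1 : ℚ) * E).coeff j = 0 := by
      have : j = (j - a) + (a : ℤ) := by ring
      rw [this, HahnSeries.coeff_single_mul_add, one_mul]
      exact ihj _ (by omega)
    rw [HahnSeries.coeff_sub, HahnSeries.coeff_sub, h1, h2, h3]
    ring

lemma coeff_mul_eq_zero (x y : LaurentSeries ℚ) (c : ℤ)
    (hx : ∀ j : ℤ, j < c → x.coeff j = 0) (j : ℤ) (hj : j < c + y.order) :
    (x * y).coeff j = 0 := by
  rcases eq_or_ne x 0 with rfl | hx0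
  · simp
  rcases eq_or_ne y 0 with rfl | hy0
  · simp
  have hcx : c ≤ x.order := by
    by_contra h
    exact (mt HahnSeries.coeff_order_eq_zero.mp hx0) (hx _ (by omega))
  refine HahnSeries.coeff_eq_zero_of_lt_order ?_
  rw [HahnSeries.order_mul hx0 hy0]
  omega

lemma sum_coeff (s : Finset ℕ) (f : ℕ → LaurentSeries ℚ) (j : ℤ) :
    (∑ i ∈ s, f i).coeff j = ∑ i ∈ s, (f i).coeff j := by
  classical
  induction s using Finset.induction with
  | empty => simp
  | @insert a s ha ih => simp [Finset.sum_insert ha, HahnSeries.coeff_add, ih]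

/-- Lemma 7.1: if `P_i = ((q;q)_n/(q;q)_{n-i}) Q_i` and `ord(P_i) + i < ord(P_{i+1})`
for all `i < n`, then `Σ_{i=0}^n P_i ≐_n Σ_{i=0}^n Q_i`. -/
theorem sum_nEquiv (n : ℕ) (hn : 1 ≤ n) (Q P : ℕ → LaurentSeries ℚ)
    (hQ : ∀ i : ℕ, i ≤ n → Q i ≠ 0)
    (hPdef : ∀ i : ℕ, i ≤ n →
      P i = (∏ k ∈ Finset.Icc (n - i + 1) n, (1 - qv ^ k)) * Q i)
    (hord : ∀ i : ℕ, i < n → (P i).order + (i : ℤ) < (P (i + 1)).order) :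
    (∑ i ∈ Finset.range (n + 1), P i) ≠ 0 ∧
    (∑ i ∈ Finset.range (n + 1), Q i) ≠ 0 ∧
    NEquiv n (∑ i ∈ Finset.range (n + 1), P i) (∑ i ∈ Finset.range (n + 1), Q i) := by
  classical
  set F : ℕ → LaurentSeries ℚ := fun i => ∏ k ∈ Finset.Icc (n - i + 1) n, (1 - qv ^ k)
    with hF
  -- coefficient vanishing for F i - 1
  have hFc : ∀ i : ℕ, i ≤ n → ∀ j : ℤ, j < ((n : ℤ) - i + 1) → ((F i) - 1).coeff j = 0 := by
    intro i hi j hj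
    refine prod_sub_one_coeff _ _ (by omega) ?_ j hj
    intro k hk
    rw [Finset.mem_Icc] at hk
    omega
  have hF1 : ∀ i : ℕ, i ≤ n → (F i).coeff 0 = 1 := by
    intro i hi
    have := hFc i hi 0 (by omega)
    rw [HahnSeries.coeff_sub] at this
    have h1 : (1 : LaurentSeries ℚ).coeff (0 : ℤ) = 1 := HahnSeries.coeff_one.trans (by simp)
    linarith [this, h1]
  have hFne : ∀ i : ℕ, i ≤ n → F i ≠ 0 := by
    intro i hi h
    have := hF1 i hi
    rw [h] at this
    simp at this
  have hFneg : ∀ i : ℕ, i ≤ n → ∀ j : ℤ, j < 0 → (F i).coeff j = 0 := by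
    intro i hi j hj
    have := hFc i hi j (by omega)
    rw [HahnSeries.coeff_sub] at this
    have h1 : (1 : LaurentSeries ℚ).coeff j = 0 := by
      rw [HahnSeries.coeff_one, if_neg (by omega)]
    linarith [this, h1]
  have hFord : ∀ i : ℕ, i ≤ n → (F i).order = 0 := by
    intro i hi
    have hle : (F i).order ≤ 0 := HahnSeries.order_le_of_coeff_ne_zero (by rw [hF1 i hi]; norm_num)
    have hge : ¬ (F i).order < 0 := by
      intro h
      exact (mt HahnSeries.coeff_order_eq_zero.mp (hFne i hi)) (hFneg i hi _ h)
    omega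
  have hPeq : ∀ i : ℕ, i ≤ n → P i = F i * Q i := hPdef
  have hPne : ∀ i : ℕ, i ≤ n → P i ≠ 0 := by
    intro i hi
    rw [hPeq i hi]
    exact mul_ne_zero (hFne i hi) (hQ i hi)
  have hordQ : ∀ i : ℕ, i ≤ n → (Q i).order = (P i).order := by
    intro i hi
    rw [hPeq i hi, HahnSeries.order_mul (hFne i hi) (hQ i hi), hFord i hi, zero_add]
  set m : ℤ := (P 0).order with hm
  have hA : ∀ i : ℕ, i ≤ n → m + (i : ℤ) ≤ (P i).order := by
    intro i
    induction i with
    | zero => intro _; simp [hm]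
    | succ i ih =>
      intro hi
      have h1 := ih (by omega)
      have h2 := hord i (by omega)
      push_cast
      push_cast at h1
      omega
  -- coefficient of the sums at j < m vanish, and at m equal the 0th term
  have hcoeffP : ∀ j : ℤ, j < m → ∀ i : ℕ, i ≤ n → (P i).coeff j = 0 := by
    intro j hj i hi
    exact HahnSeries.coeff_eq_zero_of_lt_order (by have := hA i hi; omega)
  have hcoeffQ : ∀ j : ℤ, j < m → ∀ i : ℕ, i ≤ n → (Q i).coeff j = 0 := by
    intro j hj i hi
    refine HahnSeries.coeff_eq_zero_of_lt_order ?_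
    rw [hordQ i hi]
    have := hA i hi; omega
  have hSPm : (∑ i ∈ Finset.range (n + 1), P i).coeff m = (P 0).coeff m := by
    rw [sum_coeff]
    refine Finset.sum_eq_single 0 ?_ (by simp)
    intro i hi hi0
    have hi' : i ≤ n := by simpa [Nat.lt_succ_iff] using Finset.mem_range.mp hi
    refine HahnSeries.coeff_eq_zero_of_lt_order ?_
    have := hA i hi'
    have : (1 : ℤ) ≤ i := by exact_mod_cast Nat.one_le_iff_ne_zero.mpr hi0
    have := hA i hi'
    omega
  have hSQm : (∑ i ∈ Finset.range (n + 1), Q i).coeff m = (Q 0).coeff m := by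
    rw [sum_coeff]
    refine Finset.sum_eq_single 0 ?_ (by simp)
    intro i hi hi0
    have hi' : i ≤ n := by simpa [Nat.lt_succ_iff] using Finset.mem_range.mp hi
    refine HahnSeries.coeff_eq_zero_of_lt_order ?_
    rw [hordQ i hi']
    have h1 := hA i hi'
    have h2 : (1 : ℤ) ≤ i := by exact_mod_cast Nat.one_le_iff_ne_zero.mpr hi0
    omega
  have hP0m : (P 0).coeff m ≠ 0 := (mt HahnSeries.coeff_order_eq_zero.mp (hPne 0 (by omega)))
  have hQ0m : (Q 0).coeff m ≠ 0 := by
    have : (Q 0).order = m := hordQ 0 (by omega)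
    rw [← this]
    exact (mt HahnSeries.coeff_order_eq_zero.mp (hQ 0 (by omega)))
  have hSPne : (∑ i ∈ Finset.range (n + 1), P i) ≠ 0 := by
    intro h
    rw [h] at hSPm
    simp at hSPm
    exact hP0m hSPm.symm
  have hSQne : (∑ i ∈ Finset.range (n + 1), Q i) ≠ 0 := by
    intro h
    rw [h] at hSQm
    simp at hSQm
    exact hQ0m hSQm.symm
  have hSPord : (∑ i ∈ Finset.range (n + 1), P i).order = m := by
    have hle : (∑ i ∈ Finset.range (n + 1), P i).order ≤ m :=
      HahnSeries.order_le_of_coeff_ne_zero (by rw [hSPm]; exact hP0m)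
    have hge : ¬ (∑ i ∈ Finset.range (n + 1), P i).order < m := by
      intro h
      refine (mt HahnSeries.coeff_order_eq_zero.mp hSPne) ?_
      rw [sum_coeff]
      refine Finset.sum_eq_zero ?_
      intro i hi
      exact hcoeffP _ h i (by simpa [Nat.lt_succ_iff] using Finset.mem_range.mp hi)
    omega
  have hSQord : (∑ i ∈ Finset.range (n + 1), Q i).order = m := by
    have hle : (∑ i ∈ Finset.range (n + 1), Q i).order ≤ m :=
      HahnSeries.order_le_of_coeff_ne_zero (by rw [hSQm]; exact hQ0m)
    have hge : ¬ (∑ i ∈ Finset.range (n + 1), Q i).order < m := by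
      intro h
      refine (mt HahnSeries.coeff_order_eq_zero.mp hSQne) ?_
      rw [sum_coeff]
      refine Finset.sum_eq_zero ?_
      intro i hi
      exact hcoeffQ _ h i (by simpa [Nat.lt_succ_iff] using Finset.mem_range.mp hi)
    omega
  refine ⟨hSPne, hSQne, 1, Or.inl rfl, ?_⟩
  intro k hk
  rw [hSPord, hSQord, one_mul]
  -- show coefficients of the difference vanish
  have hdiff : ∀ i : ℕ, i ≤ n → (P i - Q i).coeff (m + (k : ℤ)) = 0 := by
    intro i hi
    have : P i - Q i = ((F i) - 1) * Q i := by
      rw [hPeq i hi, sub_mul, one_mul]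
    rw [this]
    refine coeff_mul_eq_zero _ _ ((n : ℤ) - i + 1) (hFc i hi) _ ?_
    rw [hordQ i hi]
    have := hA i hi
    omega
  have : (∑ i ∈ Finset.range (n + 1), P i).coeff (m + (k : ℤ))
      - (∑ i ∈ Finset.range (n + 1), Q i).coeff (m + (k : ℤ)) = 0 := by
    rw [← HahnSeries.coeff_sub, ← Finset.sum_sub_distrib, sum_coeff]
    refine Finset.sum_eq_zero ?_
    intro i hi
    exact hdiff i (by simpa [Nat.lt_succ_iff] using Finset.mem_range.mp hi)
  linarith
end

section
/- For every integer n ≥ 1 define the formal power series Θ̃_n := (q;q)_n³ · (q;q)_{3n+1} · ((1 − q) · (q;q)_{2n}³)⁻¹ ∈ ℚ[[q]] (a unit multiple structure: every inverted factor has constant term 1). Then for every natural number k < n and every natural number N ≥ k, the coefficient of q^k in Θ̃_n equals the coefficient of q^k in (q;q)_N · (1 − q)⁻¹. In other words, the tail of the theta quantum spin network with all three edges colored 2n is T(Θ_{2n}) = (q;q)_∞/(1 − q). -/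
open Finset PowerSeries

/-- The finite q-Pochhammer symbol `(q;q)_m = ∏_{k=1}^m (1 - q^k)` in `ℚ[[q]]`. -/
noncomputable def qPoch (m : ℕ) : PowerSeries ℚ :=
  ∏ k ∈ Finset.Icc 1 m, (1 - (PowerSeries.X : PowerSeries ℚ) ^ k)

lemma constantCoeff_qPoch (m : ℕ) : PowerSeries.constantCoeff (qPoch m) = 1 := by
  unfold qPoch
  rw [map_prod]
  apply Finset.prod_eq_one
  intro j hj
  have hj1 : 1 ≤ j := (Finset.mem_Icc.mp hj).1
  simp [zero_pow (by omega : j ≠ 0)]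

lemma dvd_mul_sub {R : Type*} [CommRing R] {d a a' b b' : R}
    (ha : d ∣ a - a') (hb : d ∣ b - b') : d ∣ a * b - a' * b' := by
  have h : a * b - a' * b' = (a - a') * b + a' * (b - b') := by ring
  rw [h]
  exact dvd_add (ha.mul_right _) (hb.mul_left _)

lemma dvd_pow3_sub {R : Type*} [CommRing R] {d a b : R}
    (h : d ∣ a - b) : d ∣ a ^ 3 - b ^ 3 := by
  have h3 : a ^ 3 - b ^ 3 = (a - b) * (a ^ 2 + a * b + b ^ 2) := by ring
  rw [h3]
  exact h.mul_right _

lemma qPoch_mod (k m : ℕ) (h : k ≤ m) :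
    (PowerSeries.X : PowerSeries ℚ) ^ (k + 1) ∣ qPoch m - qPoch k := by
  induction m, h using Nat.le_induction with
  | base => simp
  | succ m hm ih =>
    have hstep : qPoch (m + 1) = qPoch m * (1 - (PowerSeries.X : PowerSeries ℚ) ^ (m + 1)) := by
      unfold qPoch
      rw [Finset.prod_Icc_succ_top (by omega : 1 ≤ m + 1)]
    have hdecomp : qPoch (m + 1) - qPoch k =
        (qPoch m - qPoch k) - qPoch m * (PowerSeries.X : PowerSeries ℚ) ^ (m + 1) := by
      rw [hstep]; ring
    rw [hdecomp]
    refine dvd_sub ih (Dvd.dvd.mul_left ?_ _)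
    exact pow_dvd_pow _ (by omega)

/-- Proposition 7.2(1): the tail of the theta quantum spin network with all edges
colored `2n` is `(q;q)_∞/(1-q)`: for every `k < n` and `N ≥ k`, the coefficient of `q^k`
in `Θ̃_n = (q;q)_n³ (q;q)_{3n+1} ((1-q)(q;q)_{2n}³)⁻¹` equals that of `(q;q)_N (1-q)⁻¹`. -/
theorem tail_theta (n : ℕ) (hn : 1 ≤ n) (k : ℕ) (hk : k < n) (N : ℕ) (hN : k ≤ N) :
    (PowerSeries.coeff k)
        ((qPoch n) ^ 3 * qPoch (3 * n + 1) *
          ((1 - (PowerSeries.X : PowerSeries ℚ)) * (qPoch (2 * n)) ^ 3)⁻¹) =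
      (PowerSeries.coeff k)
        (qPoch N * (1 - (PowerSeries.X : PowerSeries ℚ))⁻¹) := by
  set q : PowerSeries ℚ := PowerSeries.X
  set g : PowerSeries ℚ := (qPoch (2 * n)) ^ 3 with hg
  have hgc : PowerSeries.constantCoeff g = 1 := by
    rw [hg, map_pow, constantCoeff_qPoch, one_pow]
  have hone : PowerSeries.constantCoeff (1 - q) = 1 := by
    simp [q]
  have hginv : g * g⁻¹ = 1 := PowerSeries.mul_inv_cancel _ (by rw [hgc]; exact one_ne_zero)
  -- key divisibility
  have h1 : q ^ (k + 1) ∣ qPoch n - qPoch k := qPoch_mod k n hk.le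
  have h2 : q ^ (k + 1) ∣ qPoch (3 * n + 1) - qPoch k := qPoch_mod k (3 * n + 1) (by omega)
  have h3 : q ^ (k + 1) ∣ qPoch (2 * n) - qPoch k := qPoch_mod k (2 * n) (by omega)
  have h4 : q ^ (k + 1) ∣ qPoch N - qPoch k := qPoch_mod k N hN
  have hA : q ^ (k + 1) ∣ (qPoch n) ^ 3 * qPoch (3 * n + 1) - (qPoch k) ^ 3 * qPoch k :=
    dvd_mul_sub (dvd_pow3_sub h1) h2
  have hB : q ^ (k + 1) ∣ qPoch N * g - qPoch k * (qPoch k) ^ 3 :=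
    dvd_mul_sub h4 (dvd_pow3_sub h3)
  have hAB : q ^ (k + 1) ∣ (qPoch n) ^ 3 * qPoch (3 * n + 1) - qPoch N * g := by
    have := dvd_sub hA hB
    have heq : (qPoch n) ^ 3 * qPoch (3 * n + 1) - (qPoch k) ^ 3 * qPoch k -
        (qPoch N * g - qPoch k * (qPoch k) ^ 3) =
        (qPoch n) ^ 3 * qPoch (3 * n + 1) - qPoch N * g := by ring
    rwa [heq] at this
  -- rewrite the difference
  have hu : ((1 - q) * g)⁻¹ = g⁻¹ * (1 - q)⁻¹ := PowerSeries.mul_inv_rev _ _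
  have hkey : (qPoch n) ^ 3 * qPoch (3 * n + 1) * ((1 - q) * g)⁻¹ - qPoch N * (1 - q)⁻¹ =
      ((qPoch n) ^ 3 * qPoch (3 * n + 1) - qPoch N * g) * ((1 - q) * g)⁻¹ := by
    rw [hu]
    have : qPoch N * g * (g⁻¹ * (1 - q)⁻¹) = qPoch N * (g * g⁻¹) * (1 - q)⁻¹ := by ring
    rw [sub_mul, this, hginv, mul_one]
  have hdvd : q ^ (k + 1) ∣
      (qPoch n) ^ 3 * qPoch (3 * n + 1) * ((1 - q) * g)⁻¹ - qPoch N * (1 - q)⁻¹ := by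
    rw [hkey]; exact hAB.mul_right _
  have hcoeff : (PowerSeries.coeff k)
      ((qPoch n) ^ 3 * qPoch (3 * n + 1) * ((1 - q) * g)⁻¹ - qPoch N * (1 - q)⁻¹) = 0 :=
    PowerSeries.X_pow_dvd_iff.mp hdvd k (Nat.lt_succ_self k)
  rw [map_sub] at hcoeff
  linarith
end

section
/- For every integer n ≥ 1 define the formal power series H̃_n := (q;q)_n^{12} · ((1 − q) · (q;q)_{2n}⁶)⁻¹ · Σ_{i=0}^{n} (−1)^i q^{i(3i+1)/2} (q;q)_{4n−i} · ((q;q)_{n−i}⁴ · (q;q)_i³)⁻¹ ∈ ℚ[[q]]. Then for every natural number k < n and all natural numbers N, M ≥ n, the coefficient of q^k in H̃_n equals the coefficient of q^k in (q;q)_N³ · (1 − q)⁻¹ · Σ_{i=0}^{M} (−1)^i q^{i(3i+1)/2} ((q;q)_i³)⁻¹. In other words, the tail of the tetrahedron quantum spin network with all six edges colored 2n is T(H_{2n}) = ((q;q)_∞³/(1 − q)) Σ_{i=0}^{∞} (−1)^i q^{(i+3i²)/2}/(q;q)_i³. -/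
open Finset PowerSeries

lemma constCoeff_qPoch (m : ℕ) : constantCoeff (R := ℚ) (qPoch m) = 1 := by
  unfold qPoch
  rw [map_prod]
  apply Finset.prod_eq_one
  intro x hx
  have hx1 : 1 ≤ x := (Finset.mem_Icc.mp hx).1
  simp [map_pow, PowerSeries.constantCoeff_X, zero_pow (by omega : x ≠ 0)]

lemma qPoch_ne (m : ℕ) : constantCoeff (R := ℚ) (qPoch m) ≠ 0 := by
  rw [constCoeff_qPoch]; norm_num

lemma dvd_prod_sub_one {j : ℕ} {s : Finset ℕ} (hs : ∀ x ∈ s, j ≤ x) :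
    (X : PowerSeries ℚ) ^ j ∣ (∏ x ∈ s, (1 - (X : PowerSeries ℚ) ^ x)) - 1 := by
  classical
  induction s using Finset.induction with
  | empty => simp
  | @insert a s ha ih =>
    rw [Finset.prod_insert ha]
    have h1 : (X : PowerSeries ℚ) ^ j ∣ (∏ x ∈ s, (1 - (X : PowerSeries ℚ) ^ x)) - 1 :=
      ih fun x hx => hs x (Finset.mem_insert_of_mem hx)
    have h2 : (X : PowerSeries ℚ) ^ j ∣ (X : PowerSeries ℚ) ^ a :=
      pow_dvd_pow _ (hs a (Finset.mem_insert_self a s))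
    have : (1 - (X : PowerSeries ℚ) ^ a) * (∏ x ∈ s, (1 - (X : PowerSeries ℚ) ^ x)) - 1
        = ((∏ x ∈ s, (1 - (X : PowerSeries ℚ) ^ x)) - 1)
          - (X : PowerSeries ℚ) ^ a * (∏ x ∈ s, (1 - (X : PowerSeries ℚ) ^ x)) := by ring
    rw [this]
    exact dvd_sub h1 (h2.mul_right _)

lemma qPoch_congr {j m m' : ℕ} (h : j ≤ m + 1) (h' : j ≤ m' + 1) :
    (X : PowerSeries ℚ) ^ j ∣ qPoch m - qPoch m' := by
  wlog hmm : m' ≤ m with H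
  · rw [dvd_sub_comm]; exact H h' h (by omega)
  have key : qPoch m = qPoch m' * ∏ x ∈ Finset.Ioc m' m, (1 - (X : PowerSeries ℚ) ^ x) := by
    unfold qPoch
    rw [show Finset.Icc 1 m = Finset.Ioc 0 m by rfl, show Finset.Icc 1 m' = Finset.Ioc 0 m' by rfl]
    exact (Finset.prod_Ioc_consecutive _ (Nat.zero_le m') hmm).symm
  rw [key]
  have : qPoch m' * (∏ x ∈ Finset.Ioc m' m, (1 - (X : PowerSeries ℚ) ^ x)) - qPoch m'
      = qPoch m' * ((∏ x ∈ Finset.Ioc m' m, (1 - (X : PowerSeries ℚ) ^ x)) - 1) := by ring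
  rw [this]
  exact (dvd_prod_sub_one fun x hx => by have := (Finset.mem_Ioc.mp hx).1; omega).mul_left _

lemma dvd_mulSubMul {x a b c d : PowerSeries ℚ} (h1 : x ∣ a - b) (h2 : x ∣ c - d) :
    x ∣ a * c - b * d := by
  have : a * c - b * d = a * (c - d) + (a - b) * d := by ring
  rw [this]
  exact dvd_add (h2.mul_left _) (h1.mul_right _)

lemma dvd_powSubPow {x a b : PowerSeries ℚ} (h : x ∣ a - b) (m : ℕ) :
    x ∣ a ^ m - b ^ m :=
  h.trans (sub_dvd_pow_sub_pow a b m)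

lemma dvd_inv_sub_inv {j : ℕ} {f g : PowerSeries ℚ} (hf : constantCoeff (R := ℚ) f ≠ 0)
    (hg : constantCoeff (R := ℚ) g ≠ 0) (h : (X : PowerSeries ℚ) ^ j ∣ f - g) :
    (X : PowerSeries ℚ) ^ j ∣ f⁻¹ - g⁻¹ := by
  have key : f⁻¹ - g⁻¹ = f⁻¹ * (g - f) * g⁻¹ := by
    have h1 : f⁻¹ * f = 1 := PowerSeries.inv_mul_cancel f hf
    have h2 : g * g⁻¹ = 1 := PowerSeries.mul_inv_cancel g hg
    calc f⁻¹ - g⁻¹ = f⁻¹ * (g * g⁻¹) - (f⁻¹ * f) * g⁻¹ := by rw [h1, h2]; ring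
    _ = f⁻¹ * (g - f) * g⁻¹ := by ring
  rw [key, dvd_sub_comm] at *
  exact (h.mul_left _).mul_right _

lemma cc_mul_pow_ne (a b c d : ℕ) :
    constantCoeff (R := ℚ) (qPoch a ^ c * qPoch b ^ d) ≠ 0 := by
  rw [map_mul, map_pow, map_pow, constCoeff_qPoch, constCoeff_qPoch]; norm_num

lemma cc_one_sub_X_mul_ne (m : ℕ) :
    constantCoeff (R := ℚ) ((1 - (X : PowerSeries ℚ)) * qPoch m ^ 6) ≠ 0 := by
  rw [map_mul, map_sub, map_one, map_pow, constCoeff_qPoch, PowerSeries.constantCoeff_X]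
  norm_num

lemma le_e (i : ℕ) : i ≤ i * (3 * i + 1) / 2 := by
  rw [Nat.le_div_iff_mul_le (by norm_num)]
  rcases Nat.eq_zero_or_pos i with h | h
  · simp [h]
  · nlinarith

lemma key_identity (P Q s : PowerSeries ℚ) (hP : constantCoeff (R := ℚ) P ≠ 0)
    (hQ : constantCoeff (R := ℚ) Q ≠ 0) :
    P ^ 12 * ((1 - (X : PowerSeries ℚ)) * P ^ 6)⁻¹ * (s * P * (P ^ 4 * Q ^ 3)⁻¹)
      = P ^ 3 * (1 - (X : PowerSeries ℚ))⁻¹ * (s * (Q ^ 3)⁻¹) := by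
  rw [PowerSeries.mul_inv_rev, PowerSeries.mul_inv_rev]
  have h6 : P ^ 6 * (P ^ 6)⁻¹ = 1 :=
    PowerSeries.mul_inv_cancel _ (by rw [map_pow]; exact pow_ne_zero _ hP)
  have h4 : P ^ 4 * (P ^ 4)⁻¹ = 1 :=
    PowerSeries.mul_inv_cancel _ (by rw [map_pow]; exact pow_ne_zero _ hP)
  linear_combination ((1 - (X : PowerSeries ℚ))⁻¹ * s * (Q ^ 3)⁻¹ * P ^ 3 * P ^ 4 *
      (P ^ 4)⁻¹) * h6 + ((1 - (X : PowerSeries ℚ))⁻¹ * s * (Q ^ 3)⁻¹ * P ^ 3) * h4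

lemma sum_tail_dvd {D A B : ℕ} (hAB : A ≤ B) (f : ℕ → PowerSeries ℚ)
    (hf : ∀ i, A ≤ i → (X : PowerSeries ℚ) ^ D ∣ f i) :
    (X : PowerSeries ℚ) ^ D ∣ (∑ i ∈ Finset.range B, f i - ∑ i ∈ Finset.range A, f i) := by
  rw [← Finset.sum_Ico_eq_sub _ hAB]
  exact Finset.dvd_sum fun i hi => hf i (Finset.mem_Ico.mp hi).1

lemma term_congr (n k i : ℕ) (hk : k < n) (hi : i ≤ n) :
    (X : PowerSeries ℚ) ^ (k + 1) ∣
      ((-1 : PowerSeries ℚ) ^ i * (X : PowerSeries ℚ) ^ (i * (3 * i + 1) / 2) *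
          qPoch (4 * n - i) * ((qPoch (n - i)) ^ 4 * (qPoch i) ^ 3)⁻¹
        - (-1 : PowerSeries ℚ) ^ i * (X : PowerSeries ℚ) ^ (i * (3 * i + 1) / 2) *
          qPoch n * ((qPoch n) ^ 4 * (qPoch i) ^ 3)⁻¹) := by
  have hie : i ≤ i * (3 * i + 1) / 2 := le_e i
  set e := i * (3 * i + 1) / 2 with he
  by_cases hcase : k + 1 ≤ e
  · apply dvd_sub
    · exact (((pow_dvd_pow (X : PowerSeries ℚ) hcase).mul_left _).mul_right _).mul_right _
    · exact (((pow_dvd_pow (X : PowerSeries ℚ) hcase).mul_left _).mul_right _).mul_right _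
  · push_neg at hcase
    have hik : i ≤ k := le_trans hie (by omega)
    have hfact : (X : PowerSeries ℚ) ^ (k + 1) = X ^ e * X ^ (k + 1 - e) := by
      rw [← pow_add]; congr 1; omega
    have hdiff : (-1 : PowerSeries ℚ) ^ i * (X : PowerSeries ℚ) ^ e *
          qPoch (4 * n - i) * ((qPoch (n - i)) ^ 4 * (qPoch i) ^ 3)⁻¹
        - (-1 : PowerSeries ℚ) ^ i * (X : PowerSeries ℚ) ^ e *
          qPoch n * ((qPoch n) ^ 4 * (qPoch i) ^ 3)⁻¹
        = ((-1 : PowerSeries ℚ) ^ i * (X : PowerSeries ℚ) ^ e) *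
            (qPoch (4 * n - i) * ((qPoch (n - i)) ^ 4 * (qPoch i) ^ 3)⁻¹
              - qPoch n * ((qPoch n) ^ 4 * (qPoch i) ^ 3)⁻¹) := by ring
    rw [hdiff, hfact]
    apply mul_dvd_mul
    · exact Dvd.dvd.mul_left dvd_rfl _
    · apply dvd_mulSubMul
      · exact qPoch_congr (by omega) (by omega)
      · apply dvd_inv_sub_inv (cc_mul_pow_ne _ _ _ _) (cc_mul_pow_ne _ _ _ _)
        exact dvd_mulSubMul (dvd_powSubPow (qPoch_congr (by omega) (by omega)) 4) (by simp)

/-- Proposition 7.2(2): the tail of the tetrahedron quantum spin network with all six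
edges colored `2n` is `((q;q)_∞³/(1-q)) Σ_{i=0}^∞ (-1)^i q^{(i+3i²)/2}/(q;q)_i³`:
for every `k < n` and all `N, M ≥ n`, the coefficient of `q^k` in
`H̃_n = (q;q)_n¹² ((1-q)(q;q)_{2n}⁶)⁻¹ Σ_{i=0}^n (-1)^i q^{i(3i+1)/2} (q;q)_{4n-i} ((q;q)_{n-i}⁴ (q;q)_i³)⁻¹`
equals that of `(q;q)_N³ (1-q)⁻¹ Σ_{i=0}^M (-1)^i q^{i(3i+1)/2} ((q;q)_i³)⁻¹`. -/
theorem tail_tetrahedron (n : ℕ) (hn : 1 ≤ n) (k : ℕ) (hk : k < n)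
    (N M : ℕ) (hN : n ≤ N) (hM : n ≤ M) :
    (PowerSeries.coeff (R := ℚ) k)
        ((qPoch n) ^ 12 *
          ((1 - (PowerSeries.X : PowerSeries ℚ)) * (qPoch (2 * n)) ^ 6)⁻¹ *
          ∑ i ∈ Finset.range (n + 1),
            (-1 : PowerSeries ℚ) ^ i *
              (PowerSeries.X : PowerSeries ℚ) ^ (i * (3 * i + 1) / 2) *
              qPoch (4 * n - i) * ((qPoch (n - i)) ^ 4 * (qPoch i) ^ 3)⁻¹) =
      (PowerSeries.coeff (R := ℚ) k)
        ((qPoch N) ^ 3 * (1 - (PowerSeries.X : PowerSeries ℚ))⁻¹ *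
          ∑ i ∈ Finset.range (M + 1),
            (-1 : PowerSeries ℚ) ^ i *
              (PowerSeries.X : PowerSeries ℚ) ^ (i * (3 * i + 1) / 2) *
              ((qPoch i) ^ 3)⁻¹) := by
  classical
  -- tails of the canonical sums are divisible by X^(k+1)
  have htail : ∀ i, k + 1 ≤ i → (X : PowerSeries ℚ) ^ (k + 1) ∣
      (-1 : PowerSeries ℚ) ^ i * (X : PowerSeries ℚ) ^ (i * (3 * i + 1) / 2) *
        ((qPoch i) ^ 3)⁻¹ := fun i hi =>
    ((pow_dvd_pow (X : PowerSeries ℚ) (le_trans hi (le_e i))).mul_left _).mul_right _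
  have hutail : ∀ i, k + 1 ≤ i → (X : PowerSeries ℚ) ^ (k + 1) ∣
      (-1 : PowerSeries ℚ) ^ i * (X : PowerSeries ℚ) ^ (i * (3 * i + 1) / 2) *
        qPoch n * ((qPoch n) ^ 4 * (qPoch i) ^ 3)⁻¹ := fun i hi =>
    (((pow_dvd_pow (X : PowerSeries ℚ) (le_trans hi (le_e i))).mul_left _).mul_right _).mul_right _
  -- canonical comparison series
  set C : PowerSeries ℚ := (qPoch n) ^ 3 * (1 - (X : PowerSeries ℚ))⁻¹ *
      ∑ i ∈ Finset.range (k + 1),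
        (-1 : PowerSeries ℚ) ^ i * (X : PowerSeries ℚ) ^ (i * (3 * i + 1) / 2) *
          ((qPoch i) ^ 3)⁻¹ with hCdef
  have hRHS : (X : PowerSeries ℚ) ^ (k + 1) ∣
      ((qPoch N) ^ 3 * (1 - (X : PowerSeries ℚ))⁻¹ *
        ∑ i ∈ Finset.range (M + 1),
          (-1 : PowerSeries ℚ) ^ i * (X : PowerSeries ℚ) ^ (i * (3 * i + 1) / 2) *
            ((qPoch i) ^ 3)⁻¹) - C := by
    apply dvd_mulSubMul
    · exact dvd_mulSubMul (dvd_powSubPow (qPoch_congr (by omega) (by omega)) 3) (by simp)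
    · exact sum_tail_dvd (by omega) _ htail
  have hLHS : (X : PowerSeries ℚ) ^ (k + 1) ∣
      ((qPoch n) ^ 12 * ((1 - (X : PowerSeries ℚ)) * (qPoch (2 * n)) ^ 6)⁻¹ *
        ∑ i ∈ Finset.range (n + 1),
          (-1 : PowerSeries ℚ) ^ i * (X : PowerSeries ℚ) ^ (i * (3 * i + 1) / 2) *
            qPoch (4 * n - i) * ((qPoch (n - i)) ^ 4 * (qPoch i) ^ 3)⁻¹) - C := by
    have h1 : (X : PowerSeries ℚ) ^ (k + 1) ∣
        ((qPoch n) ^ 12 * ((1 - (X : PowerSeries ℚ)) * (qPoch (2 * n)) ^ 6)⁻¹ *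
          ∑ i ∈ Finset.range (n + 1),
            (-1 : PowerSeries ℚ) ^ i * (X : PowerSeries ℚ) ^ (i * (3 * i + 1) / 2) *
              qPoch (4 * n - i) * ((qPoch (n - i)) ^ 4 * (qPoch i) ^ 3)⁻¹)
        - ((qPoch n) ^ 12 * ((1 - (X : PowerSeries ℚ)) * (qPoch n) ^ 6)⁻¹ *
          ∑ i ∈ Finset.range (n + 1),
            (-1 : PowerSeries ℚ) ^ i * (X : PowerSeries ℚ) ^ (i * (3 * i + 1) / 2) *
              qPoch n * ((qPoch n) ^ 4 * (qPoch i) ^ 3)⁻¹) := by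
      apply dvd_mulSubMul
      · apply dvd_mulSubMul (by simp)
        exact dvd_inv_sub_inv (cc_one_sub_X_mul_ne _) (cc_one_sub_X_mul_ne _)
          (dvd_mulSubMul (by simp) (dvd_powSubPow (qPoch_congr (by omega) (by omega)) 6))
      · rw [← Finset.sum_sub_distrib]
        exact Finset.dvd_sum fun i hi =>
          term_congr n k i hk (by have := Finset.mem_range.mp hi; omega)
    have h2 : (qPoch n) ^ 12 * ((1 - (X : PowerSeries ℚ)) * (qPoch n) ^ 6)⁻¹ *
          ∑ i ∈ Finset.range (n + 1),
            (-1 : PowerSeries ℚ) ^ i * (X : PowerSeries ℚ) ^ (i * (3 * i + 1) / 2) *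
              qPoch n * ((qPoch n) ^ 4 * (qPoch i) ^ 3)⁻¹
        = (qPoch n) ^ 3 * (1 - (X : PowerSeries ℚ))⁻¹ *
          ∑ i ∈ Finset.range (n + 1),
            (-1 : PowerSeries ℚ) ^ i * (X : PowerSeries ℚ) ^ (i * (3 * i + 1) / 2) *
              ((qPoch i) ^ 3)⁻¹ := by
      rw [Finset.mul_sum, Finset.mul_sum]
      exact Finset.sum_congr rfl fun i _ =>
        key_identity (qPoch n) (qPoch i)
          ((-1 : PowerSeries ℚ) ^ i * (X : PowerSeries ℚ) ^ (i * (3 * i + 1) / 2))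
          (qPoch_ne n) (qPoch_ne i)
    have h3 : (X : PowerSeries ℚ) ^ (k + 1) ∣
        ((qPoch n) ^ 3 * (1 - (X : PowerSeries ℚ))⁻¹ *
          ∑ i ∈ Finset.range (n + 1),
            (-1 : PowerSeries ℚ) ^ i * (X : PowerSeries ℚ) ^ (i * (3 * i + 1) / 2) *
              ((qPoch i) ^ 3)⁻¹) - C :=
      dvd_mulSubMul (by simp) (sum_tail_dvd (by omega) _ htail)
    rw [h2] at h1
    have h4 := dvd_add h1 h3
    rwa [sub_add_sub_cancel] at h4
  rw [← sub_eq_zero, ← map_sub]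
  refine PowerSeries.X_pow_dvd_iff.mp ?_ k (Nat.lt_succ_self k)
  have h := dvd_sub hLHS hRHS
  rwa [sub_sub_sub_cancel_right] at h
end
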